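/- arXiv:0907.0877 — 3 statements merged into one kernel-verified Lean document; each statement's English description precedes it below -/
import Mathlib

section
/- Let L₁, L₂ ⊆ {0,1}* be such that (L₁, <ₗ) and (L₂, <ₗ) are both well-ordered. Then (L₁ ∪ L₂, <ₗ) is well-ordered, and if o(Lᵢ) ≤ αᵢ where each αᵢ is an infinite limit ordinal (so 1 + αᵢ = αᵢ), then o(L₁ ∪ L₂) ≤ max(α₁ · α₂, α₂ · α₁). -/
/-- The branching (strict) order on words: `u <ₛ v` iff they have a common
prefix followed by letters `a < b`. -/
def BranchLT {A : Type*} [LinearOrder A] (u v : List A) : Prop :=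
  ∃ (w : List A) (a b : A) (u' v' : List A),
    a < b ∧ u = w ++ a :: u' ∧ v = w ++ b :: v'

/-- The proper-prefix order on words. -/
def PrefLT {A : Type*} [LinearOrder A] (u v : List A) : Prop :=
  u <+: v ∧ u ≠ v

/-- The lexicographic order: proper prefix or branching. -/
def WordLex {A : Type*} [LinearOrder A] (u v : List A) : Prop :=
  PrefLT u v ∨ BranchLT u v

/-- A prefix language: no member is a proper prefix of another member. -/
def IsPrefixLang {A : Type*} [LinearOrder A] (L : Set (List A)) : Prop :=
  ∀ u ∈ L, ∀ v : List A, u ++ v ∈ L → v = []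

/-- The lexicographic order restricted to a set of words. -/
def subLex {A : Type*} [LinearOrder A] (L : Set (List A)) : ↥L → ↥L → Prop :=
  fun a b => WordLex a.1 b.1

/-- Elementwise concatenation of two languages. -/
def LangConcat {A : Type*} (K L : Set (List A)) : Set (List A) :=
  { w | ∃ u ∈ K, ∃ v ∈ L, w = u ++ v }

/-- `n`-fold concatenation power of a language. -/
def LangPow {A : Type*} (L : Set (List A)) : ℕ → Set (List A)
  | 0 => {[]}
  | n + 1 => LangConcat L (LangPow L n)

/-! Rank a word `x` by `rᵢ(x)`, the order type of the words of `Lᵢ` below `x`. Since the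
lexicographic order is total, one language, say `L₂`, is cofinal in `L₁ ∪ L₂`; then
`r₂(x) < o(L₂) ≤ α₂` on the union while `r₁(x) ≤ α₁`. Each word of the union raises one of the
two ranks strictly and the other weakly, so `x ↦ (α₁ + 1) · r₂(x) + r₁(x)` is strictly increasing,
and its values stay below `(α₁ + 1) · α₂ = α₁ · α₂` because `α₂` is a limit and `α₁` is infinite. -/

open Ordinal Order

theorem wordLex_iff_lt {A : Type*} [LinearOrder A] {u v : List A} : WordLex u v ↔ u < v := by
  constructor
  · rintro (⟨⟨t, rfl⟩, hne⟩ | ⟨w, a, b, u', v', hab, rfl, rfl⟩)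
    · obtain ⟨c, t, rfl⟩ := List.exists_cons_of_ne_nil (fun ht : t = [] => hne (by simp [ht]))
      simpa using List.Lex.append_left (· < ·) (List.Lex.nil (a := c) (l := t)) u
    · exact List.Lex.append_left _ (List.Lex.rel hab) w
  · intro h
    induction h with
    | nil => exact Or.inl ⟨⟨_, rfl⟩, by simp⟩
    | @rel a l₁ b l₂ h => exact Or.inr ⟨[], a, b, l₁, l₂, h, rfl, rfl⟩
    | @cons a l₁ l₂ h ih =>
      rcases ih with ⟨⟨t, rfl⟩, hne⟩ | ⟨w, x, y, u', v', hxy, rfl, rfl⟩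
      · exact Or.inl ⟨⟨t, rfl⟩, fun h => hne (by injection h)⟩
      · exact Or.inr ⟨a :: w, x, y, u', v', hxy, rfl, rfl⟩

def subLexIso {A : Type*} [LinearOrder A] (L : Set (List A)) :
    subLex L ≃r ((· < ·) : L → L → Prop) :=
  ⟨Equiv.refl L, wordLex_iff_lt.symm⟩

namespace Ordinal

theorem add_one_mul_le_mul_add_one {β : Ordinal} (hβ : ω ≤ β) (γ : Ordinal) :
    (β + 1) * γ ≤ β * γ + 1 := by
  induction γ using Ordinal.limitRecOn with
  | zero => simp
  | add_one γ ih =>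
    calc (β + 1) * (γ + 1) = (β + 1) * γ + (β + 1) := by rw [mul_add_one]
      _ ≤ β * γ + 1 + (β + 1) := by gcongr
      _ = β * (γ + 1) + 1 := by
        rw [add_assoc, ← add_assoc 1, one_add_of_omega0_le hβ, mul_add_one, add_assoc]
  | limit γ hγ ih =>
    refine le_trans ((mul_le_iff_of_isSuccLimit hγ).2 fun δ hδ => ?_) le_self_add
    calc (β + 1) * δ ≤ β * δ + 1 := ih δ hδ
      _ ≤ β * (δ + 1) := by rw [mul_add_one]; gcongr; exact one_lt_omega0.le.trans hβ
      _ ≤ β * γ := by gcongr; exact add_one_le_iff.2 hδ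

theorem add_one_mul_le_mul_of_isSuccLimit {β γ : Ordinal} (hβ : ω ≤ β) (hγ : IsSuccLimit γ) :
    (β + 1) * γ ≤ β * γ := by
  refine (mul_le_iff_of_isSuccLimit hγ).2 fun δ hδ => (add_one_mul_le_mul_add_one hβ δ).trans ?_
  calc β * δ + 1 ≤ β * (δ + 1) := by rw [mul_add_one]; gcongr; exact one_lt_omega0.le.trans hβ
    _ ≤ β * γ := by gcongr; exact add_one_le_iff.2 hδ

theorem mul_add_lt_mul_add {a b b' c c' : Ordinal} (hb : b < a) (hc : c < c') :
    a * c + b < a * c' + b' :=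
  calc a * c + b < a * (c + 1) := by rw [mul_add_one]; gcongr
    _ ≤ a * c' := by gcongr; exact add_one_le_iff.2 hc
    _ ≤ a * c' + b' := le_self_add

theorem typeLT_le_of_strictMono {X : Type*} [LinearOrder X] [WellFoundedLT X]
    {o : Ordinal} {g : X → Ordinal} (hg : StrictMono g) (hlt : ∀ x, g x < o) : typeLT X ≤ o := by
  rw [← type_toType o]
  exact (OrderEmbedding.ofStrictMono (fun x => ToType.mk ⟨g x, hlt x⟩)
    fun x y hxy => ToType.mk.lt_iff_lt.2 (hg hxy)).ltEmbedding.ordinal_type_le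

end Ordinal

section RankIn

variable {α : Type*} [LinearOrder α] (s : Set α) [WellFoundedLT s]

noncomputable def rankIn (x : α) : Ordinal :=
  typeLT {v : s | (v : α) < x}

theorem rankIn_mono : Monotone (rankIn s) :=
  fun _ _ hxy => type_mono fun _ hv => lt_of_lt_of_le hv hxy

theorem rankIn_le_type (x : α) : rankIn s x ≤ typeLT s :=
  type_set_le _

variable {s}

theorem rankIn_lt_rankIn {x y : α} (hx : x ∈ s) (hxy : x < y) : rankIn s x < rankIn s y :=
  ((PrincipalSeg.ofElement (· < ·) (⟨x, hx⟩ : s)).codRestrict {v : s | (v : α) < y}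
    (fun v => lt_trans (α := α) v.2 hxy) hxy).ordinal_type_lt

-- For `x ∈ s`, `rankIn s x` is definitionally `typein (· < ·) ⟨x, hx⟩`.
theorem rankIn_lt_type {x : α} (hx : x ∈ s) : rankIn s x < typeLT s :=
  typein_lt_type _ (⟨x, hx⟩ : s)

end RankIn

theorem forall_exists_le_or_forall_exists_le {α : Type*} [LinearOrder α] (s t : Set α) :
    (∀ x ∈ s, ∃ y ∈ t, x ≤ y) ∨ ∀ y ∈ t, ∃ x ∈ s, y ≤ x := by
  by_contra! h
  obtain ⟨⟨x, hx, hxt⟩, ⟨y, hy, hys⟩⟩ := h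
  exact lt_asymm (hxt y hy) (hys x hx)

instance Set.wellFoundedLT_union {α : Type*} [LinearOrder α] (s t : Set α) [WellFoundedLT s]
    [WellFoundedLT t] : WellFoundedLT ↥(s ∪ t) :=
  ⟨Set.IsWF.union (wellFounded_lt (α := s)) (wellFounded_lt (α := t))⟩

theorem typeLT_le_mul_of_subset_union {α : Type*} [LinearOrder α] {s t u : Set α}
    [WellFoundedLT s] [WellFoundedLT t] [WellFoundedLT u] (hu : u ⊆ s ∪ t)
    (hst : ∀ x ∈ s, ∃ y ∈ t, x ≤ y) {β γ : Ordinal} (hβ : ω ≤ β) (hγ : IsSuccLimit γ)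
    (hs : typeLT s ≤ β) (ht : typeLT t ≤ γ) : typeLT u ≤ β * γ := by
  let f : u → Ordinal := fun x => (β + 1) * rankIn t x + rankIn s x
  have hsβ (x : α) : rankIn s x < β + 1 := lt_add_one_iff.2 ((rankIn_le_type s x).trans hs)
  have hf : StrictMono f := by
    intro ⟨x, hx⟩ ⟨y, _⟩ (hxy : x < y)
    rcases hu hx with hxs | hxt
    · calc f ⟨x, hx⟩ < (β + 1) * rankIn t x + rankIn s y :=
            add_lt_add_right (rankIn_lt_rankIn hxs hxy) _
        _ ≤ f ⟨y, _⟩ := add_le_add_left (mul_le_mul_right (rankIn_mono t hxy.le) _) _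
    · exact mul_add_lt_mul_add (hsβ x) (rankIn_lt_rankIn hxt hxy)
  refine typeLT_le_of_strictMono hf fun ⟨x, hx⟩ => ?_
  have hxt : rankIn t x < γ := by
    rcases hu hx with hxs | hxt
    · obtain ⟨y, hy, hxy⟩ := hst x hxs
      exact ((rankIn_mono t hxy).trans_lt (rankIn_lt_type hy)).trans_le ht
    · exact (rankIn_lt_type hxt).trans_le ht
  calc f ⟨x, hx⟩ < (β + 1) * (rankIn t x + 1) + 0 := mul_add_lt_mul_add (hsβ x) (lt_add_one _)
    _ ≤ (β + 1) * γ := by rw [add_zero]; gcongr; exact add_one_le_iff.2 hxt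
    _ ≤ β * γ := add_one_mul_le_mul_of_isSuccLimit hβ hγ

/-- If `L₁, L₂ ⊆ {0,1}*` are both well-ordered by `<ₗ`, then so is
`L₁ ∪ L₂`; moreover if `o(Lᵢ) ≤ αᵢ` with each `αᵢ` an infinite limit
ordinal, then `o(L₁ ∪ L₂) ≤ max (α₁·α₂) (α₂·α₁)`. -/
theorem stmt9 (L₁ L₂ : Set (List Bool))
    (w₁ : IsWellOrder ↥L₁ (subLex L₁)) (w₂ : IsWellOrder ↥L₂ (subLex L₂))
    (α₁ α₂ : Ordinal) (hα₁ : Order.IsSuccLimit α₁) (hα₂ : Order.IsSuccLimit α₂)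
    (hα₁' : Ordinal.omega0 ≤ α₁) (hα₂' : Ordinal.omega0 ≤ α₂)
    (hb₁ : @Ordinal.type _ _ w₁ ≤ α₁) (hb₂ : @Ordinal.type _ _ w₂ ≤ α₂) :
    ∃ w : IsWellOrder ↥(L₁ ∪ L₂) (subLex (L₁ ∪ L₂)),
      @Ordinal.type _ _ w ≤ max (α₁ * α₂) (α₂ * α₁) := by
  have := (subLexIso L₁).symm.toRelEmbedding.isWellOrder
  have := (subLexIso L₂).symm.toRelEmbedding.isWellOrder
  rw [(subLexIso L₁).ordinalType_congr] at hb₁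
  rw [(subLexIso L₂).ordinalType_congr] at hb₂
  have w : IsWellOrder ↥(L₁ ∪ L₂) (subLex (L₁ ∪ L₂)) :=
    (subLexIso _).toRelEmbedding.isWellOrder
  refine ⟨w, ?_⟩
  rw [(subLexIso _).ordinalType_congr]
  rcases forall_exists_le_or_forall_exists_le L₁ L₂ with h | h
  · exact le_max_of_le_left (typeLT_le_mul_of_subset_union subset_rfl h hα₁' hα₂ hb₁ hb₂)
  · exact le_max_of_le_right
      (typeLT_le_mul_of_subset_union (Set.union_comm L₁ L₂).le h hα₂' hα₁ hb₂ hb₁)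
end

section
/- In an ordinal grammar, suppose X ⇒* u·X·p (u a nonempty terminal word) and X ⇒* v with v a terminal word. Then either v <ₛ u or u is a proper prefix of v. -/
/-- A context-free grammar over the terminal alphabet `{0,1}` (= `Bool`,
with `false = 0 < 1 = true`), with nonterminals `N`. -/
structure CFG (N : Type) where
  start : N
  prods : N → Set (List (N ⊕ Bool))

/-- One derivation step: replace an occurrence of a nonterminal by the
right-hand side of one of its productions. -/
def CFG.Step {N : Type} (G : CFG N) (p q : List (N ⊕ Bool)) : Prop :=
  ∃ (l r : List (N ⊕ Bool)) (X : N) (w : List (N ⊕ Bool)),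
    p = l ++ Sum.inl X :: r ∧ w ∈ G.prods X ∧ q = l ++ w ++ r

/-- Derivation: the reflexive-transitive closure of `Step`. -/
def CFG.Derives {N : Type} (G : CFG N) : List (N ⊕ Bool) → List (N ⊕ Bool) → Prop :=
  Relation.ReflTransGen G.Step

/-- View a terminal word as a sentential form. -/
def liftWord {N : Type} (u : List Bool) : List (N ⊕ Bool) := u.map Sum.inr

/-- The language of terminal words derivable from a sentential form `q`. -/
def CFG.lang {N : Type} (G : CFG N) (q : List (N ⊕ Bool)) : Set (List Bool) :=
  { u | G.Derives q (liftWord u) }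

/-- The language of a nonterminal. -/
def CFG.langN {N : Type} (G : CFG N) (X : N) : Set (List Bool) :=
  G.lang [Sum.inl X]

/-- A nonterminal is accessible if it occurs in some sentential form
derivable from the start symbol. -/
def CFG.Accessible {N : Type} (G : CFG N) (X : N) : Prop :=
  ∃ q r : List (N ⊕ Bool), G.Derives [Sum.inl G.start] (q ++ Sum.inl X :: r)

/-! Pumping the loop `X ⇒* u·X·p` yields the words `uⁿ·v·wⁿ ∈ L(X)`, where `w` is a terminal
word derived from `p`. Of the four ways `u` and `v` can compare, two are the claim. If `u <ₛ v`,
these words form an infinite `<ₛ`-descending chain, which a context `q·_·r` of the accessible `X`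
carries into the well-ordered `L(start)`. If `v` is a prefix of `u`, then `v` is a prefix of
`u·v·w ∈ L(X)`, so the prefix property forces `u = []`. -/

section Words

variable {A : Type*} [LinearOrder A]

theorem BranchLT.append {u v : List A} (h : BranchLT u v) (l s t : List A) :
    BranchLT (l ++ u ++ s) (l ++ v ++ t) := by
  obtain ⟨c, a, b, u', v', hab, rfl, rfl⟩ := h
  exact ⟨l ++ c, a, b, u' ++ s, v' ++ t, hab, by simp, by simp⟩

theorem BranchLT.cons {u v : List A} (h : BranchLT u v) (a : A) :
    BranchLT (a :: u) (a :: v) := by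
  simpa using h.append [a] [] []

theorem branchLT_or_prefLT_or_branchLT_or_prefix (u v : List A) :
    BranchLT v u ∨ PrefLT u v ∨ BranchLT u v ∨ v <+: u := by
  induction u generalizing v with
  | nil =>
    rcases v with _ | ⟨b, v⟩
    · exact Or.inr <| Or.inr <| Or.inr List.prefix_rfl
    · exact Or.inr <| Or.inl ⟨List.nil_prefix, by simp⟩
  | cons a u ih =>
    rcases v with _ | ⟨b, v⟩
    · exact Or.inr <| Or.inr <| Or.inr List.nil_prefix
    rcases lt_trichotomy a b with hab | rfl | hba
    · exact Or.inr <| Or.inr <| Or.inl ⟨[], a, b, u, v, hab, rfl, rfl⟩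
    · rcases ih v with H | ⟨hp, hne⟩ | H | H
      · exact Or.inl (H.cons a)
      · exact Or.inr <| Or.inl ⟨List.prefix_cons_inj a |>.mpr hp, by simpa using hne⟩
      · exact Or.inr <| Or.inr <| Or.inl (H.cons a)
      · exact Or.inr <| Or.inr <| Or.inr (List.prefix_cons_inj a |>.mpr H)
    · exact Or.inl ⟨[], b, a, v, u, hba, rfl, rfl⟩

theorem BranchLT.iterate_wrap {u v : List A} (h : BranchLT u v) (w : List A) (n : ℕ) :
    BranchLT ((fun x => u ++ x ++ w)^[n + 1] v) ((fun x => u ++ x ++ w)^[n] v) := by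
  induction n with
  | zero => simpa using h.append [] (v ++ w) []
  | succ n ih => simpa only [Function.iterate_succ_apply'] using ih.append u w w

theorem IsPrefixLang.eq_nil_of_prefix {L : Set (List A)} (hL : IsPrefixLang L) {u v w : List A}
    (hv : v ∈ L) (huvw : u ++ v ++ w ∈ L) (hvu : v <+: u) : u = [] := by
  obtain ⟨s, rfl⟩ := hvu
  have := hL v hv (s ++ v ++ w) (by simpa using huvw)
  simp_all

end Words

namespace CFG

variable {N : Type} {G : CFG N}

theorem Step.append_left {p q : List (N ⊕ Bool)} (h : G.Step p q) (l : List (N ⊕ Bool)) :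
    G.Step (l ++ p) (l ++ q) := by
  obtain ⟨a, r, Y, w, rfl, hw, rfl⟩ := h
  exact ⟨l ++ a, r, Y, w, by simp, hw, by simp⟩

theorem Step.append_right {p q : List (N ⊕ Bool)} (h : G.Step p q) (r : List (N ⊕ Bool)) :
    G.Step (p ++ r) (q ++ r) := by
  obtain ⟨a, b, Y, w, rfl, hw, rfl⟩ := h
  exact ⟨a, b ++ r, Y, w, by simp, hw, by simp⟩

theorem Derives.append {p q p' q' : List (N ⊕ Bool)} (h : G.Derives p q) (h' : G.Derives p' q') :
    G.Derives (p ++ p') (q ++ q') :=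
  (h.lift (· ++ p') fun _ _ hs => hs.append_right p').trans
    (h'.lift (q ++ ·) fun _ _ hs => hs.append_left q)

theorem append_mem_lang {p q : List (N ⊕ Bool)} {u v : List Bool}
    (hu : u ∈ G.lang p) (hv : v ∈ G.lang q) : u ++ v ∈ G.lang (p ++ q) := by
  simpa [CFG.lang, liftWord] using Derives.append hu hv

theorem lang_nonempty (hco : ∀ X : N, (G.langN X).Nonempty) (s : List (N ⊕ Bool)) :
    (G.lang s).Nonempty := by
  induction s with
  | nil => exact ⟨[], .refl⟩
  | cons x s ih =>
    obtain ⟨t, ht⟩ := ih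
    rcases x with Y | b
    · obtain ⟨v, hv⟩ := hco Y
      exact ⟨v ++ t, append_mem_lang hv ht⟩
    · exact ⟨b :: t, append_mem_lang (p := [Sum.inr b]) (u := [b]) .refl ht⟩

theorem lang_subset_of_derives {p q : List (N ⊕ Bool)} (h : G.Derives p q) :
    G.lang q ⊆ G.lang p :=
  fun _ hx => h.trans hx

theorem wrap_mem_langN {X : N} {u w : List Bool} {p : List (N ⊕ Bool)}
    (hu : G.Derives [Sum.inl X] (liftWord u ++ Sum.inl X :: p)) (hw : w ∈ G.lang p)
    {x : List Bool} (hx : x ∈ G.langN X) : u ++ x ++ w ∈ G.langN X :=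
  lang_subset_of_derives hu <| by
    simpa only [List.append_assoc, List.singleton_append] using
      append_mem_lang (append_mem_lang (p := liftWord u) .refl hx) hw

theorem exists_context_of_accessible (hco : ∀ X : N, (G.langN X).Nonempty) {X : N}
    (hX : G.Accessible X) : ∃ q r : List Bool, ∀ x ∈ G.langN X, q ++ x ++ r ∈ G.langN G.start := by
  obtain ⟨qX, rX, hXs⟩ := hX
  obtain ⟨q, hq⟩ := lang_nonempty hco qX
  obtain ⟨r, hr⟩ := lang_nonempty hco rX
  refine ⟨q, r, fun x hx => lang_subset_of_derives hXs ?_⟩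
  simpa only [List.append_assoc, List.singleton_append] using
    append_mem_lang (append_mem_lang hq hx) hr

theorem not_branchLT_descending_chain (hco : ∀ X : N, (G.langN X).Nonempty)
    (hwo : IsWellOrder ↥(G.langN G.start) (subLex (G.langN G.start)))
    {X : N} (hX : G.Accessible X) (a : ℕ → List Bool) (ha : ∀ n, a n ∈ G.langN X) :
    ¬ ∀ n, BranchLT (a (n + 1)) (a n) := by
  intro hdesc
  obtain ⟨q, r, hqr⟩ := exists_context_of_accessible hco hX
  obtain ⟨n, hn⟩ := WellFounded.not_rel_apply_succ
    (r := subLex (G.langN G.start)) fun n => ⟨q ++ a n ++ r, hqr _ (ha n)⟩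
  exact hn (Or.inr ((hdesc n).append q r r))

end CFG

theorem stmt16_general {N : Type} (G : CFG N)
    (hacc : ∀ X : N, G.Accessible X)
    (hco : ∀ X : N, (G.langN X).Nonempty)
    (hpre : ∀ X : N, IsPrefixLang (G.langN X))
    (hwo : IsWellOrder ↥(G.langN G.start) (subLex (G.langN G.start)))
    (X : N) (u v : List Bool) (p : List (N ⊕ Bool))
    (hne : u ≠ [])
    (hu : G.Derives [Sum.inl X] (liftWord u ++ Sum.inl X :: p))
    (hv : v ∈ G.langN X) :
    BranchLT v u ∨ PrefLT u v := by
  obtain ⟨w, hw⟩ := CFG.lang_nonempty hco p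
  have hpump : ∀ n, (fun x => u ++ x ++ w)^[n] v ∈ G.langN X := fun n =>
    Set.MapsTo.iterate (fun _ => CFG.wrap_mem_langN hu hw) n hv
  rcases branchLT_or_prefLT_or_branchLT_or_prefix u v with H | H | H | H
  · exact Or.inl H
  · exact Or.inr H
  · exact (CFG.not_branchLT_descending_chain hco hwo (hacc X) _ hpump (H.iterate_wrap w)).elim
  · exact (hne <| (hpre X).eq_nil_of_prefix hv (hpump 1) H).elim

/-- In an ordinal grammar, if X ⇒* u·X·p with u a nonempty terminal word and
X ⇒* v with v a terminal word, then either v <ₛ u or u is a proper prefix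
of v. -/
theorem stmt16 {N : Type} (G : CFG N)
    (hacc : ∀ X : N, G.Accessible X)
    (hco : ∀ X : N, (G.langN X).Nonempty)
    (hpre : ∀ X : N, IsPrefixLang (G.langN X))
    (htwo : ∀ X : N, ∃ u v : List Bool, u ∈ G.langN X ∧ v ∈ G.langN X ∧ u ≠ v)
    (hwo : IsWellOrder ↥(G.langN G.start) (subLex (G.langN G.start)))
    (X : N) (u v : List Bool) (p : List (N ⊕ Bool))
    (hne : u ≠ [])
    (hu : G.Derives [Sum.inl X] (liftWord u ++ Sum.inl X :: p))
    (hv : v ∈ G.langN X) :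
    BranchLT v u ∨ PrefLT u v :=
  stmt16_general G hacc hco hpre hwo X u v p hne hu hv
end

section
/- Let X be a recursive nonterminal of an ordinal grammar, i.e., X ⇒* p·X·q nontrivially for some p, q. Then there is a unique primitive word u₀ ∈ {0,1}⁺ such that whenever X ⇒* u·X·p with u a nonempty terminal word, u is a power of u₀. -/
/-- The `n`-fold concatenation power of a word. -/
def wordPow (v : List Bool) : ℕ → List Bool
  | 0 => []
  | n + 1 => v ++ wordPow v n

/-- A primitive word: a nonempty word that is not a proper power. -/
def PrimitiveWord (w : List Bool) : Prop :=
  w ≠ [] ∧ ∀ (v : List Bool) (n : ℕ), 2 ≤ n → w ≠ wordPow v n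

/-!
Call `u` a pumping word of `X` if `X ⇒* u X p`; pumping words are closed under concatenation.
Two pumping words `u = c a x` and `v = c b y` with `a < b` cannot exist: completing `uᵏ v` to words
`α uᵏ v tₖ β` of the start language gives a lexicographically descending sequence, contradicting
the well-order. Hence pumping words of equal length coincide, so `uv = vu` for any two of them, and
pairwise commuting words are powers of one primitive word. A nonempty pumping word exists because
a derivation `X ⇒* X q` with `q ≠ []` would put a proper extension of a word of `L(X)` into `L(X)`.
-/

section Words

variable {w x y z : List Bool}

lemma wordPow_length (v : List Bool) (n : ℕ) : (wordPow v n).length = n * v.length := by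
  induction n with
  | zero => simp [wordPow]
  | succ n ih => simp [wordPow, ih, Nat.succ_mul, Nat.add_comm]

lemma append_wordPow_comm (h : x ++ y = y ++ x) (n : ℕ) :
    x ++ wordPow y n = wordPow y n ++ x := by
  induction n with
  | zero => simp [wordPow]
  | succ n ih => rw [wordPow, ← List.append_assoc, h, List.append_assoc, ih, List.append_assoc]

lemma take_wordPow_of_comm (h : x ++ w = w ++ x) {k : ℕ} (hk : x.length ≤ k * w.length) :
    (wordPow w k).take x.length = x := by
  have hpow : (x ++ wordPow w k).take x.length = x := by simp
  rwa [append_wordPow_comm h, List.take_append_of_le_length (by rwa [wordPow_length])] at hpow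

/-- Two words commuting with a nonempty `w` are both prefixes of a long power of `w`. -/
lemma prefix_of_comm (hw : w ≠ []) (hx : x ++ w = w ++ x) (hy : y ++ w = w ++ y)
    (hxy : x.length ≤ y.length) : x <+: y := by
  have hk : y.length ≤ y.length * w.length :=
    Nat.le_mul_of_pos_right _ (List.length_pos_iff.mpr hw)
  refine List.prefix_iff_eq_take.mpr ?_
  calc x = (wordPow w y.length).take x.length := (take_wordPow_of_comm hx (hxy.trans hk)).symm
    _ = ((wordPow w y.length).take y.length).take x.length := by
      rw [List.take_take, min_eq_left hxy]
    _ = y.take x.length := by rw [take_wordPow_of_comm hy hk]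

lemma comm_of_append_comm (hx : x ++ w = w ++ x) (hxy : x ++ y ++ w = w ++ (x ++ y)) :
    y ++ w = w ++ y := by
  apply List.append_cancel_left (as := x)
  rw [← List.append_assoc, hxy, ← List.append_assoc, ← hx, List.append_assoc]

lemma exists_eq_wordPow_of_comm (hw : w ≠ []) (hz : z ≠ [] ∧ z ++ w = w ++ z)
    (hmin : ∀ y, y ≠ [] → y ++ w = w ++ y → z.length ≤ y.length) :
    ∀ x, x ≠ [] → x ++ w = w ++ x → ∃ a, 1 ≤ a ∧ x = wordPow z a := by
  intro x
  induction x using WellFounded.induction (measure List.length).wf with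
  | h x ih =>
  intro hx hxw
  obtain ⟨t, rfl⟩ := prefix_of_comm hw hz.2 hxw (hmin x hx hxw)
  by_cases ht : t = []
  · exact ⟨1, le_rfl, by simp [ht, wordPow]⟩
  · have hlen : t.length < (z ++ t).length := by
      simp [List.length_pos_iff.mpr hz.1]
    obtain ⟨a, -, rfl⟩ := ih t hlen ht (comm_of_append_comm hz.2 hxw)
    exact ⟨a + 1, by omega, rfl⟩

/-- Lyndon–Schützenberger. The common primitive root is a shortest nonempty word commuting with
one fixed member `w` of `S`. -/
theorem existsUnique_primitive_of_pairwise_comm (S : Set (List Bool)) (hne : S.Nonempty)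
    (hS : ∀ x ∈ S, x ≠ []) (hcomm : ∀ x ∈ S, ∀ y ∈ S, x ++ y = y ++ x) :
    ∃! z : List Bool, PrimitiveWord z ∧ ∀ x ∈ S, ∃ n, 1 ≤ n ∧ x = wordPow z n := by
  obtain ⟨w, hwS⟩ := hne
  have hw := hS w hwS
  obtain ⟨z, hz, hmin⟩ := (measure List.length).wf.has_min
    {y | y ≠ [] ∧ y ++ w = w ++ y} ⟨w, hw, rfl⟩
  replace hmin : ∀ y, y ≠ [] → y ++ w = w ++ y → z.length ≤ y.length :=
    fun y hy hyw => not_lt.mp (hmin y ⟨hy, hyw⟩)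
  have hpow := exists_eq_wordPow_of_comm hw hz hmin
  obtain ⟨b, -, hwz⟩ := hpow w hw rfl
  have hprim : PrimitiveWord z := by
    refine ⟨hz.1, fun v n hn hzv => ?_⟩
    have hzlen : z.length = n * v.length := by rw [hzv, wordPow_length]
    have hv : v ≠ [] := by
      rintro rfl
      exact hz.1 (List.length_eq_zero_iff.mp (by simpa using hzlen))
    have hvw : v ++ w = w ++ v := by
      rw [hwz]
      exact append_wordPow_comm (by rw [hzv]; exact append_wordPow_comm rfl n) b
    have := hmin v hv hvw
    have := List.length_pos_iff.mpr hv
    nlinarith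
  refine ⟨z, ⟨hprim, fun x hx => hpow x (hS x hx) (hcomm x hx w hwS)⟩, ?_⟩
  rintro t ⟨htprim, htS⟩
  obtain ⟨m, -, hwt⟩ := htS w hwS
  obtain ⟨k, hk, rfl⟩ := hpow t htprim.1 (by rw [hwt]; exact append_wordPow_comm rfl m)
  obtain rfl | hk2 : k = 1 ∨ 2 ≤ k := by omega
  · simp [wordPow]
  · exact absurd rfl (htprim.2 z k hk2)

end Words

lemma branchLT_or_branchLT_of_ne {A : Type*} [LinearOrder A] :
    ∀ {u v : List A}, u.length = v.length → u ≠ v → BranchLT u v ∨ BranchLT v u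
  | [], [], _, hne => absurd rfl hne
  | a :: u, b :: v, hl, hne => by
    rcases lt_trichotomy a b with hab | rfl | hab
    · exact Or.inl ⟨[], a, b, u, v, hab, rfl, rfl⟩
    · have huv : u ≠ v := fun h => hne (h ▸ rfl)
      rcases branchLT_or_branchLT_of_ne (by simpa using hl) huv with
        ⟨w, c, d, x, y, hcd, rfl, rfl⟩ | ⟨w, c, d, x, y, hcd, rfl, rfl⟩
      · exact Or.inl ⟨a :: w, c, d, x, y, hcd, rfl, rfl⟩
      · exact Or.inr ⟨a :: w, c, d, x, y, hcd, rfl, rfl⟩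
    · exact Or.inr ⟨[], b, a, v, u, hab, rfl, rfl⟩

@[simp]
lemma liftWord_append {N : Type} (u v : List Bool) :
    (liftWord (u ++ v) : List (N ⊕ Bool)) = liftWord u ++ liftWord v := by
  simp [liftWord]

namespace CFG

variable {N : Type}

def Pumps (G : CFG N) (X : N) (u : List Bool) : Prop :=
  ∃ p : List (N ⊕ Bool), G.Derives [Sum.inl X] (liftWord u ++ Sum.inl X :: p)

variable {G : CFG N}

lemma Step.context {p q : List (N ⊕ Bool)} (h : G.Step p q) (l r : List (N ⊕ Bool)) :
    G.Step (l ++ p ++ r) (l ++ q ++ r) := by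
  obtain ⟨l', r', Y, w, rfl, hw, rfl⟩ := h
  exact ⟨l ++ l', r' ++ r, Y, w, by simp, hw, by simp⟩

lemma Derives.trans {a b c : List (N ⊕ Bool)} (h₁ : G.Derives a b) (h₂ : G.Derives b c) :
    G.Derives a c :=
  Relation.ReflTransGen.trans h₁ h₂

lemma Derives.context {p q : List (N ⊕ Bool)} (h : G.Derives p q) (l r : List (N ⊕ Bool)) :
    G.Derives (l ++ p ++ r) (l ++ q ++ r) := by
  induction h with
  | refl => exact .refl
  | tail _ hstep ih => exact ih.tail (hstep.context l r)

lemma Derives.append_s17 {a b c d : List (N ⊕ Bool)} (h₁ : G.Derives a b) (h₂ : G.Derives c d) :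
    G.Derives (a ++ c) (b ++ d) := by
  have h₁' : G.Derives (a ++ c) (b ++ c) := by simpa only [List.nil_append] using h₁.context [] c
  have h₂' : G.Derives (b ++ c) (b ++ d) := by simpa only [List.append_nil] using h₂.context b []
  exact h₁'.trans h₂'

variable {X : N} {u v : List Bool}

lemma Pumps.append_s17 (h₁ : G.Pumps X u) (h₂ : G.Pumps X v) : G.Pumps X (u ++ v) := by
  obtain ⟨p, hp⟩ := h₁
  obtain ⟨q, hq⟩ := h₂
  refine ⟨q ++ p, hp.trans ?_⟩
  simpa using hq.context (liftWord u) p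

lemma Pumps.pow (h : G.Pumps X u) : ∀ k, G.Pumps X (wordPow u k)
  | 0 => ⟨[], .refl⟩
  | k + 1 => h.append_s17 (h.pow k)

variable (hlang : ∀ Y : N, ∃ w ∈ G.langN Y, w ≠ [])
include hlang

lemma exists_derives_liftWord_length_le (q : List (N ⊕ Bool)) :
    ∃ α : List Bool, G.Derives q (liftWord α) ∧ q.length ≤ α.length := by
  induction q with
  | nil => exact ⟨[], .refl, le_rfl⟩
  | cons s q ih =>
    obtain ⟨α, hα, hlen⟩ := ih
    obtain ⟨β, hβ, hβne⟩ : ∃ β : List Bool, G.Derives [s] (liftWord β) ∧ β ≠ [] := by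
      rcases s with Y | b
      · exact (hlang Y).imp fun _ h => ⟨h.1, h.2⟩
      · exact ⟨[b], .refl, List.cons_ne_nil _ _⟩
    refine ⟨β ++ α, by simpa using hβ.append_s17 hα, ?_⟩
    have := List.length_pos_iff.mpr hβne
    simp only [List.length_cons, List.length_append]
    omega

lemma Accessible.exists_mem_langN_start (hacc : G.Accessible X) :
    ∃ α β : List Bool, ∀ w ∈ G.langN X, α ++ w ++ β ∈ G.langN G.start := by
  obtain ⟨q, r, hqr⟩ := hacc
  obtain ⟨α, hα, -⟩ := exists_derives_liftWord_length_le hlang q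
  obtain ⟨β, hβ, -⟩ := exists_derives_liftWord_length_le hlang r
  refine ⟨α, β, fun w (hw : G.Derives _ _) => ?_⟩
  show G.Derives _ _
  simpa using hqr.trans (by simpa using (hα.append_s17 hw).append_s17 hβ)

lemma Pumps.exists_append_mem_langN (h : G.Pumps X u) : ∃ t, u ++ t ∈ G.langN X := by
  obtain ⟨p, hp⟩ := h
  obtain ⟨w, hw : G.Derives _ _, -⟩ := hlang X
  obtain ⟨α, hα, -⟩ := exists_derives_liftWord_length_le hlang p
  refine ⟨w ++ α, ?_⟩
  show G.Derives _ _
  simpa using hp.trans (by simpa using (hw.append_s17 hα).context (liftWord u) [])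

lemma Pumps.not_branchLT (hwf : WellFounded (subLex (G.langN G.start)))
    (hacc : G.Accessible X) (hu : G.Pumps X u) (hv : G.Pumps X v) : ¬ BranchLT u v := by
  rintro ⟨c, a, b, x, y, hab, hu_eq, hv_eq⟩
  obtain ⟨α, β, hstart⟩ := hacc.exists_mem_langN_start hlang
  choose t ht using fun k => ((hu.pow k).append_s17 hv).exists_append_mem_langN hlang
  let f : ℕ → G.langN G.start := fun k => ⟨α ++ (wordPow u k ++ v ++ t k) ++ β, hstart _ (ht k)⟩
  have : IsWellFounded _ (subLex (G.langN G.start)) := ⟨hwf⟩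
  obtain ⟨n, hn⟩ := WellFounded.not_rel_apply_succ (r := subLex (G.langN G.start)) f
  refine hn (Or.inr ⟨α ++ wordPow u n ++ c, a, b, x ++ v ++ t (n + 1) ++ β, y ++ t n ++ β, hab,
    ?_, ?_⟩)
  · simp only [f, wordPow, append_wordPow_comm rfl]
    rw [hu_eq]
    simp
  · simp [f, hv_eq]

lemma Pumps.eq_of_length_eq (hwf : WellFounded (subLex (G.langN G.start)))
    (hacc : G.Accessible X) (hu : G.Pumps X u) (hv : G.Pumps X v)
    (hlen : u.length = v.length) : u = v := by
  by_contra huv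
  rcases branchLT_or_branchLT_of_ne hlen huv with h | h
  · exact hu.not_branchLT hlang hwf hacc hv h
  · exact hv.not_branchLT hlang hwf hacc hu h

lemma Pumps.append_comm (hwf : WellFounded (subLex (G.langN G.start)))
    (hacc : G.Accessible X) (hu : G.Pumps X u) (hv : G.Pumps X v) : u ++ v = v ++ u :=
  (hu.append_s17 hv).eq_of_length_eq hlang hwf hacc (hv.append_s17 hu) (by simp [Nat.add_comm])

lemma exists_pumps_ne_nil (hpre : IsPrefixLang (G.langN X))
    (hrec : ∃ p q : List (N ⊕ Bool),
      G.Derives [Sum.inl X] (p ++ Sum.inl X :: q) ∧ p ++ Sum.inl X :: q ≠ [Sum.inl X]) :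
    ∃ u ≠ [], G.Pumps X u := by
  obtain ⟨p, q, hd, hnt⟩ := hrec
  obtain ⟨α, hα, hαlen⟩ := exists_derives_liftWord_length_le hlang p
  by_cases hp : p = []
  · subst hp
    obtain ⟨w, hw : G.Derives _ _, -⟩ := hlang X
    obtain ⟨β, hβ, hβlen⟩ := exists_derives_liftWord_length_le hlang q
    have hmem : w ++ β ∈ G.langN X := by
      show G.Derives _ _
      simpa using hd.trans (by simpa using hw.append_s17 hβ)
    have hβnil := hpre w hw β hmem
    subst hβnil
    exact absurd (by simpa using hβlen) hnt
  · refine ⟨α, List.ne_nil_of_length_pos ((List.length_pos_iff.mpr hp).trans_le hαlen), q,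
      hd.trans ?_⟩
    simpa using hα.context [] (Sum.inl X :: q)

end CFG

theorem stmt17_general {N : Type} (G : CFG N)
    (hacc : ∀ X : N, G.Accessible X)
    (hpre : ∀ X : N, IsPrefixLang (G.langN X))
    (htwo : ∀ X : N, ∃ u v : List Bool, u ∈ G.langN X ∧ v ∈ G.langN X ∧ u ≠ v)
    (hwo : IsWellOrder ↥(G.langN G.start) (subLex (G.langN G.start)))
    (X : N)
    (hrec : ∃ p q : List (N ⊕ Bool),
      G.Derives [Sum.inl X] (p ++ Sum.inl X :: q) ∧
      p ++ Sum.inl X :: q ≠ [Sum.inl X]) :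
    ∃! u₀ : List Bool, PrimitiveWord u₀ ∧
      ∀ (u : List Bool) (p : List (N ⊕ Bool)), u ≠ [] →
        G.Derives [Sum.inl X] (liftWord u ++ Sum.inl X :: p) →
        ∃ n : ℕ, 1 ≤ n ∧ u = wordPow u₀ n := by
  have hlang : ∀ Y : N, ∃ w ∈ G.langN Y, w ≠ [] := fun Y => by
    obtain ⟨u, v, hu, hv, huv⟩ := htwo Y
    by_cases h : u = []
    · exact ⟨v, hv, fun h' => huv (h.trans h'.symm)⟩
    · exact ⟨u, hu, h⟩
  obtain ⟨u₁, hu₁, hpump⟩ := G.exists_pumps_ne_nil hlang (hpre X) hrec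
  have := existsUnique_primitive_of_pairwise_comm {u | u ≠ [] ∧ G.Pumps X u}
    ⟨u₁, hu₁, hpump⟩ (fun _ hu => hu.1)
    fun _ hu _ hv => hu.2.append_comm hlang hwo.wf (hacc X) hv.2
  simpa [CFG.Pumps, imp_forall_iff] using this

/-- If X is a recursive nonterminal of an ordinal grammar (X ⇒* p·X·q
nontrivially), then there is a unique primitive word u₀ such that whenever
X ⇒* u·X·p with u a nonempty terminal word, u is a power of u₀. -/
theorem stmt17 {N : Type} (G : CFG N)
    (hacc : ∀ X : N, G.Accessible X)
    (hco : ∀ X : N, (G.langN X).Nonempty)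
    (hpre : ∀ X : N, IsPrefixLang (G.langN X))
    (htwo : ∀ X : N, ∃ u v : List Bool, u ∈ G.langN X ∧ v ∈ G.langN X ∧ u ≠ v)
    (hwo : IsWellOrder ↥(G.langN G.start) (subLex (G.langN G.start)))
    (X : N)
    (hrec : ∃ p q : List (N ⊕ Bool),
      G.Derives [Sum.inl X] (p ++ Sum.inl X :: q) ∧
      p ++ Sum.inl X :: q ≠ [Sum.inl X]) :
    ∃! u₀ : List Bool, PrimitiveWord u₀ ∧
      ∀ (u : List Bool) (p : List (N ⊕ Bool)), u ≠ [] →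
        G.Derives [Sum.inl X] (liftWord u ++ Sum.inl X :: p) →
        ∃ n : ℕ, 1 ≤ n ∧ u = wordPow u₀ n :=
  stmt17_general G hacc hpre htwo hwo X hrec
end
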